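/- arXiv:1110.2284 — 5 statements merged into one kernel-verified Lean document; each statement's English description precedes it below -/
import Mathlib

section
/- Let k be a field, C a k-coalgebra and C* its dual convolution algebra. Every left annihilator in C* is closed in the finite topology: if H ⊆ C* and I = {f ∈ C* : f*h = 0 for all h ∈ H}, then I = X^⊥ for the subspace X = Σ_{h∈H} span{Σ c₁ h(c₂) : c ∈ C} of C; in particular I = (I^⊥)^⊥. -/
open TensorProduct Coalgebra

noncomputable section

namespace Paper

variable {k : Type*} [Field k] {C : Type*} [AddCommGroup C] [Module k C] [Coalgebra k C]

/-- The convolution product on the dual of a coalgebra. -/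
def conv (f g : Module.Dual k C) : Module.Dual k C :=
  LinearMap.mul' k k ∘ₗ TensorProduct.map f g ∘ₗ comul

lemma conv_apply (f g : Module.Dual k C) (c : C) :
    conv f g c = LinearMap.mul' k k (TensorProduct.map f g (comul c)) := rfl

private lemma conv_assoc (f g h : Module.Dual k C) : conv (conv f g) h = conv f (conv g h) := by
  have h1 : (LinearMap.mul' k k ∘ₗ TensorProduct.map (conv f g) h : C ⊗[k] C →ₗ[k] k)
      = (LinearMap.mul' k k ∘ₗ TensorProduct.map
          (LinearMap.mul' k k ∘ₗ TensorProduct.map f g) h)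
        ∘ₗ (comul (R := k) (A := C)).rTensor C := by
    ext x y
    simp [conv_apply]
  have h2 : (LinearMap.mul' k k ∘ₗ TensorProduct.map f (conv g h) : C ⊗[k] C →ₗ[k] k)
      = (LinearMap.mul' k k ∘ₗ TensorProduct.map f
          (LinearMap.mul' k k ∘ₗ TensorProduct.map g h))
        ∘ₗ (comul (R := k) (A := C)).lTensor C := by
    ext x y
    simp [conv_apply]
  have h3 : (LinearMap.mul' k k ∘ₗ TensorProduct.map f
          (LinearMap.mul' k k ∘ₗ TensorProduct.map g h))
        ∘ₗ (TensorProduct.assoc k C C C).toLinearMap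
      = LinearMap.mul' k k ∘ₗ TensorProduct.map
          (LinearMap.mul' k k ∘ₗ TensorProduct.map f g) h := by
    apply TensorProduct.ext_threefold
    intro x y z
    simp [mul_assoc]
  ext c
  have e1 : conv (conv f g) h c
      = (LinearMap.mul' k k ∘ₗ TensorProduct.map (conv f g) h) (comul c) := rfl
  have e2 : conv f (conv g h) c
      = (LinearMap.mul' k k ∘ₗ TensorProduct.map f (conv g h)) (comul c) := rfl
  rw [e1, e2, h1, h2]
  simp only [LinearMap.comp_apply]
  rw [← Coalgebra.coassoc_apply (R := k) c]
  exact (LinearMap.congr_fun h3 ((comul (R := k) (A := C)).rTensor C (comul c))).symm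

private lemma counit_conv (f : Module.Dual k C) : conv counit f = f := by
  have h1 : (TensorProduct.map (counit (R := k) (A := C)) f : C ⊗[k] C →ₗ[k] k ⊗[k] k)
      = f.lTensor k ∘ₗ (counit (R := k) (A := C)).rTensor C := by
    ext x y
    simp
  ext c
  rw [conv_apply, h1, LinearMap.comp_apply, Coalgebra.rTensor_counit_comul,
    LinearMap.lTensor_tmul, LinearMap.mul'_apply, one_mul]

private lemma conv_counit (f : Module.Dual k C) : conv f counit = f := by
  have h1 : (TensorProduct.map f (counit (R := k) (A := C)) : C ⊗[k] C →ₗ[k] k ⊗[k] k)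
      = f.rTensor k ∘ₗ (counit (R := k) (A := C)).lTensor C := by
    ext x y
    simp
  ext c
  rw [conv_apply, h1, LinearMap.comp_apply, Coalgebra.lTensor_counit_comul,
    LinearMap.rTensor_tmul, LinearMap.mul'_apply, mul_one]

private lemma conv_add (f g h : Module.Dual k C) : conv f (g + h) = conv f g + conv f h := by
  ext c
  simp only [conv_apply, TensorProduct.map_add_right, LinearMap.add_apply, map_add]

private lemma add_conv (f g h : Module.Dual k C) : conv (f + g) h = conv f h + conv g h := by
  ext c
  simp only [conv_apply, TensorProduct.map_add_left, LinearMap.add_apply, map_add]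

private lemma zero_conv (f : Module.Dual k C) : conv 0 f = 0 := by
  ext c
  have : TensorProduct.map (0 : Module.Dual k C) f = 0 := by
    ext x y; simp
  simp [conv_apply, this]

private lemma conv_zero (f : Module.Dual k C) : conv f 0 = 0 := by
  ext c
  have : TensorProduct.map f (0 : Module.Dual k C) = 0 := by
    ext x y; simp
  simp [conv_apply, this]

/-- The convolution algebra structure on the dual of a coalgebra. -/
instance instRingDual : Ring (Module.Dual k C) where
  __ := (inferInstance : AddCommGroup (Module.Dual k C))
  mul := conv
  one := counit
  mul_assoc := conv_assoc
  one_mul := counit_conv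
  mul_one := conv_counit
  left_distrib := conv_add
  right_distrib := add_conv
  zero_mul := zero_conv
  mul_zero := conv_zero

lemma dual_mul_def (f g : Module.Dual k C) : f * g = conv f g := rfl

lemma dual_mul_apply (f g : Module.Dual k C) (c : C) :
    (f * g) c = LinearMap.mul' k k (TensorProduct.map f g (comul c)) := rfl

lemma dual_one_def : (1 : Module.Dual k C) = counit := rfl

variable {k : Type*} [Field k] {C : Type*} [AddCommGroup C] [Module k C] [Coalgebra k C]

instance : IsScalarTower k (Module.Dual k C) (Module.Dual k C) :=
  ⟨fun a f g => by
    show conv (a • f) g = a • conv f g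
    ext c
    simp [conv_apply, TensorProduct.map_smul_left]⟩

/-- For a subset `X ⊆ C`, its orthogonal `X^⊥ ⊆ C*`. -/
def perpC (X : Set C) : Set (Module.Dual k C) := {f | ∀ x ∈ X, f x = 0}

/-- For a subset `Y ⊆ C*`, its orthogonal `Y^⊥ ⊆ C`. -/
def perpD (Y : Set (Module.Dual k C)) : Set C := {c | ∀ f ∈ Y, f c = 0}

/-- For `h ∈ C*`, the map `c ↦ ∑ c₁ h(c₂)`; this is the canonical left action of `C*` on `C`. -/
def wedge (h : Module.Dual k C) : C →ₗ[k] C :=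
  (TensorProduct.rid k C).toLinearMap ∘ₗ h.lTensor C ∘ₗ comul

variable (k C) in
/-- A left `C*`-module `M` is rational if every element `m` admits finitely many
`mᵢ ∈ M`, `cᵢ ∈ C` with `f • m = ∑ᵢ f(cᵢ) • mᵢ` for all `f ∈ C*` (the scalar
`f (cs i) ∈ k` acting through the `k`-multiple `f (cs i) • 1` of the identity of `C*`). -/
def IsRationalLeft (M : Type*) [AddCommGroup M] [Module (Module.Dual k C) M] : Prop :=
  ∀ m : M, ∃ (n : ℕ) (ms : Fin n → M) (cs : Fin n → C),
    ∀ f : Module.Dual k C, f • m = ∑ i, (f (cs i) • (1 : Module.Dual k C)) • ms i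

variable (k C) in
/-- A right `C*`-module (i.e. a left module over the opposite ring) `M` is rational if every
element `m` admits finitely many `mᵢ ∈ M`, `cᵢ ∈ C` with `m • f = ∑ᵢ f(cᵢ) • mᵢ` for all
`f ∈ C*`. -/
def IsRationalRight (M : Type*) [AddCommGroup M] [Module (Module.Dual k C)ᵐᵒᵖ M] : Prop :=
  ∀ m : M, ∃ (n : ℕ) (ms : Fin n → M) (cs : Fin n → C),
    ∀ f : Module.Dual k C,
      (MulOpposite.op f) • m
        = ∑ i, (MulOpposite.op (f (cs i) • (1 : Module.Dual k C))) • ms i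

/-- A ring `R` is a left D-ring if every left ideal is a left annihilator. -/
def IsLeftDRing (R : Type*) [Ring R] : Prop :=
  ∀ I : Ideal R, ∃ H : Set R, (I : Set R) = {r : R | ∀ h ∈ H, r * h = 0}
universe v

/-! Since `(f * h) c = f (∑ c₁ h(c₂))`, the equation `f * h = 0` says exactly that `f` vanishes
on the image of `wedge h`; the left annihilator of `H` is therefore the orthogonal of the sum of
these images, and any orthogonal `X^⊥` satisfies `X^⊥ = ((X^⊥)^⊥)^⊥`. -/

theorem mem_perpC_submodule_iff {k : Type*} [Field k] {C : Type*} [AddCommGroup C] [Module k C]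
    {X : Submodule k C} {f : Module.Dual k C} : f ∈ perpC (X : Set C) ↔ X ≤ LinearMap.ker f :=
  Iff.rfl

theorem perpC_perpD_perpC {k : Type*} [Field k] {C : Type*} [AddCommGroup C] [Module k C]
    (X : Set C) : perpC (k := k) (perpD (perpC (k := k) X)) = perpC X :=
  Set.Subset.antisymm (fun _ hf x hx => hf x fun _ hg => hg x hx) fun f hf _ hc => hc f hf

theorem dual_mul_apply_eq_apply_wedge (f h : Module.Dual k C) (c : C) :
    (f * h) c = f (wedge h c) := by
  have key : (LinearMap.mul' k k ∘ₗ TensorProduct.map f h : C ⊗[k] C →ₗ[k] k)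
      = f ∘ₗ (TensorProduct.rid k C).toLinearMap ∘ₗ h.lTensor C := by
    ext x y
    simp [mul_comm]
  exact LinearMap.congr_fun key (comul c)

theorem dual_mul_eq_zero_iff_span_range_wedge_le_ker (f h : Module.Dual k C) :
    f * h = 0 ↔ Submodule.span k (Set.range fun c : C => wedge h c) ≤ LinearMap.ker f := by
  simp only [Submodule.span_le, Set.range_subset_iff, SetLike.mem_coe, LinearMap.mem_ker,
    ← dual_mul_apply_eq_apply_wedge, LinearMap.ext_iff, LinearMap.zero_apply]

theorem setOf_forall_mul_eq_zero_eq_perpC (H : Set (Module.Dual k C)) :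
    {f : Module.Dual k C | ∀ h ∈ H, f * h = 0}
      = perpC ((⨆ h ∈ H, Submodule.span k (Set.range fun c : C => wedge h c) :
          Submodule k C) : Set C) := by
  ext f
  rw [mem_perpC_submodule_iff, iSup₂_le_iff]
  exact forall₂_congr fun h _ => dual_mul_eq_zero_iff_span_range_wedge_le_ker f h

/-- Every left annihilator in `C*` is closed in the finite topology:
if `I = {f : ∀ h ∈ H, f * h = 0}` then `I = X^⊥` for
`X = Σ_{h ∈ H} span {Σ c₁ h(c₂) : c ∈ C}`, and in particular `I = (I^⊥)^⊥`. -/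
theorem statement0 {k : Type*} [Field k] {C : Type*} [AddCommGroup C] [Module k C]
    [Coalgebra k C] (H : Set (Module.Dual k C)) :
    {f : Module.Dual k C | ∀ h ∈ H, f * h = 0}
        = perpC ((⨆ h ∈ H, Submodule.span k (Set.range fun c : C => wedge h c) :
            Submodule k C) : Set C) ∧
    {f : Module.Dual k C | ∀ h ∈ H, f * h = 0}
        = perpC (perpD {f : Module.Dual k C | ∀ h ∈ H, f * h = 0}) := by
  rw [setOf_forall_mul_eq_zero_eq_perpC, perpC_perpD_perpC]
  exact ⟨rfl, rfl⟩

end Paper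
end
end

section
/- Let k be a field, C a k-coalgebra and C* its dual convolution algebra. Let (I_n)_{n∈ℕ} be an ascending chain I_n ⊆ I_{n+1} of closed left ideals of C* (each satisfying I_n = (I_n^⊥)^⊥). Then the union ⋃_n I_n is closed (i.e. equals its double perp) if and only if the chain is eventually stationary, i.e. there is N with I_n = I_N for all n ≥ N. -/
open TensorProduct Coalgebra

noncomputable section

namespace Paper

variable {k : Type*} [Field k] {C : Type*} [AddCommGroup C] [Module k C] [Coalgebra k C]

variable {k : Type*} [Field k] {C : Type*} [AddCommGroup C] [Module k C] [Coalgebra k C]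

/-!
Only the duality between the vector spaces `C` and `C*` matters. A closed `I` is determined by
`I^⊥ ⊆ C`, so a chain of closed ideals is stationary exactly when the descending chain
`D_n = I_n^⊥` is. If `(D_n)` is not stationary, pick `x_s ∈ D_s \ D_{s+1}` at each of the
infinitely many steps `s` where it drops. These are linearly independent modulo
`⋂ D_n = (⋃ I_n)^⊥`, so some `f ∈ C*` vanishes on `⋂ D_n` and takes the value `1` at every
`x_s`. Then `f` lies in the closure of `⋃ I_n` but in no `I_n`, as it does not vanish on `D_n`.
-/

open Submodule Module

section LinearAlgebra

variable {K V : Type*}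

theorem linearIndependent_mkQ_of_mem_of_notMem [DivisionRing K] [AddCommGroup V] [Module K V]
    {ι : Type*} [LinearOrder ι] {U : Submodule K V} {A B : ι → Submodule K V} {x : ι → V}
    (hUB : ∀ i, U ≤ B i) (hAB : ∀ i j, i < j → A j ≤ B i)
    (hxA : ∀ i, x i ∈ A i) (hxB : ∀ i, x i ∉ B i) :
    LinearIndependent K (U.mkQ ∘ x) := by
  rw [linearIndependent_iff']
  intro s
  induction s using Finset.induction_on_min with
  | empty => simp
  | insert a s has ih =>
    intro g hg
    have hsum : ∑ i ∈ insert a s, g i • x i ∈ U := by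
      rw [← Submodule.Quotient.mk_eq_zero, ← mkQ_apply, map_sum]
      simpa using hg
    have hs : ∑ i ∈ s, g i • x i ∈ B a :=
      sum_mem fun i hi => smul_mem _ _ (hAB a i (has i hi) (hxA i))
    have hga : g a = 0 := by
      by_contra hne
      refine hxB a ((smul_mem_iff_of_isUnit _ (isUnit_iff_ne_zero.2 hne)).1 ?_)
      rw [Finset.sum_insert (fun h => (has a h).false)] at hsum
      simpa using sub_mem (hUB a hsum) hs
    rw [Finset.sum_insert (fun h => (has a h).false), hga, zero_smul, zero_add] at hg
    intro i hi
    rcases Finset.mem_insert.1 hi with rfl | hi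
    exacts [hga, ih g hg i hi]

variable [Field K] [AddCommGroup V] [Module K V]

theorem exists_dual_forall_apply_eq {ι : Type*} {v : ι → V} (hv : LinearIndependent K v)
    (a : ι → K) : ∃ f : Dual K V, ∀ i, f (v i) = a i := by
  obtain ⟨f, hf⟩ := LinearMap.exists_extend (Finsupp.linearCombination K a ∘ₗ hv.repr)
  refine ⟨f, fun i => ?_⟩
  have hvi : v i ∈ span K (Set.range v) := subset_span ⟨i, rfl⟩
  simpa [hv.repr_eq_single i ⟨v i, hvi⟩ rfl] using LinearMap.congr_fun hf ⟨v i, hvi⟩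

theorem exists_forall_ge_eq_of_dualAnnihilator_iInf_le {D : ℕ → Submodule K V}
    (hD : Antitone D) (h : (⨅ n, D n).dualAnnihilator ≤ ⨆ n, (D n).dualAnnihilator) :
    ∃ N, ∀ n, N ≤ n → D n = D N := by
  by_contra hstat
  set S := {n | D (n + 1) < D n}
  have hS : S.Infinite := by
    intro hfin
    obtain ⟨N, hN⟩ := hfin.bddAbove
    refine hstat ⟨N + 1, fun n hn => Nat.le_induction rfl (fun m hm ih => ?_) n hn⟩
    have hmS : m ∉ S := fun hm' => by have := hN hm'; omega
    exact (eq_of_le_of_not_lt (hD m.le_succ) hmS).trans ih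
  choose x hxD hxD' using fun s : S => SetLike.exists_of_lt (show D (s + 1) < D s from s.2)
  have hli : LinearIndependent K ((⨅ n, D n).mkQ ∘ x) :=
    linearIndependent_mkQ_of_mem_of_notMem (fun s => iInf_le D (s + 1))
      (fun s t hst => hD (Nat.succ_le_of_lt hst)) hxD hxD'
  obtain ⟨g, hg⟩ := exists_dual_forall_apply_eq hli fun _ => 1
  have hf : g ∘ₗ (⨅ n, D n).mkQ ∈ (⨅ n, D n).dualAnnihilator :=
    (mem_dualAnnihilator _).2 fun w hw => by simp [(Submodule.Quotient.mk_eq_zero _).2 hw]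
  have hdir : Directed (· ≤ ·) fun n => (D n).dualAnnihilator :=
    Monotone.directed_le fun m n hmn => dualAnnihilator_anti (hD hmn)
  obtain ⟨n, hn⟩ := (mem_iSup_of_directed _ hdir).1 (h hf)
  obtain ⟨s, hsS, hns⟩ := hS.exists_gt n
  exact one_ne_zero <|
    (hg ⟨s, hsS⟩).symm.trans ((mem_dualAnnihilator _).1 hn _ (hD hns.le (hxD ⟨s, hsS⟩)))

theorem dualCoannihilator_dualAnnihilator_iSup_eq_iff {I : ℕ → Submodule K (Dual K V)}
    (hI : Monotone I) (hclosed : ∀ n, (I n).dualCoannihilator.dualAnnihilator = I n) :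
    (⨆ n, I n).dualCoannihilator.dualAnnihilator = ⨆ n, I n ↔ ∃ N, ∀ n, N ≤ n → I n = I N := by
  constructor
  · intro h
    have hD : Antitone fun n => (I n).dualCoannihilator := fun m n hmn =>
      dualCoannihilator_anti (hI hmn)
    obtain ⟨N, hN⟩ := exists_forall_ge_eq_of_dualAnnihilator_iInf_le hD <| by
      simp only [← dualCoannihilator_iSup_eq, h, hclosed, le_rfl]
    exact ⟨N, fun n hn => by rw [← hclosed n, ← hclosed N, hN n hn]⟩
  · rintro ⟨N, hN⟩
    have hsup : ⨆ n, I n = I N :=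
      le_antisymm (iSup_le fun n => (le_total n N).elim (hI ·) fun h => (hN n h).le)
        (le_iSup I N)
    rw [hsup, hclosed N]

theorem perpC_perpD_coe (W : Submodule K (Dual K V)) :
    perpC (perpD (W : Set (Dual K V))) =
      (W.dualCoannihilator.dualAnnihilator : Set (Dual K V)) := by
  ext f
  simp [perpC, perpD, mem_dualAnnihilator, mem_dualCoannihilator]

end LinearAlgebra

/-- If `(I_n)` is an ascending chain of closed left ideals of `C*`, then
`⋃_n I_n` is closed iff the chain is eventually stationary. -/
theorem statement1 {k : Type*} [Field k] {C : Type*} [AddCommGroup C] [Module k C]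
    [Coalgebra k C] (I : ℕ → Ideal (Module.Dual k C))
    (hchain : ∀ n, I n ≤ I (n + 1))
    (hclosed : ∀ n, (I n : Set (Module.Dual k C))
      = perpC (perpD (I n : Set (Module.Dual k C)))) :
    (⋃ n, (I n : Set (Module.Dual k C)))
        = perpC (perpD (⋃ n, (I n : Set (Module.Dual k C)))) ↔
      ∃ N, ∀ n, N ≤ n → I n = I N := by
  set J : ℕ →o Submodule k (Dual k C) :=
    ⟨fun n => (I n).restrictScalars k,
      (restrictScalars_monotone k _ _).comp (monotone_nat_of_le_succ hchain)⟩
  have hunion : (⋃ n, (I n : Set (Dual k C))) = ⨆ n, J n := (coe_iSup_of_chain J).symm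
  have hJclosed (n : ℕ) : (J n).dualCoannihilator.dualAnnihilator = J n :=
    SetLike.coe_injective ((perpC_perpD_coe (J n)).symm.trans (hclosed n).symm)
  rw [hunion, perpC_perpD_coe, SetLike.coe_set_eq, eq_comm,
    dualCoannihilator_dualAnnihilator_iSup_eq_iff J.monotone hJclosed]
  simp only [J, OrderHom.coe_mk, restrictScalars_inj]

end Paper
end
end

section
/- Let k be a field, C a k-coalgebra and C* its dual convolution algebra. Then every left ideal of C* is closed (i.e. every left ideal I satisfies I = (I^⊥)^⊥) if and only if C* is left Noetherian. -/
open TensorProduct Coalgebra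

noncomputable section

namespace Paper

variable {k : Type*} [Field k] {C : Type*} [AddCommGroup C] [Module k C] [Coalgebra k C]

variable {k : Type*} [Field k] {C : Type*} [AddCommGroup C] [Module k C] [Coalgebra k C]

/-! A finitely generated left ideal `J = ∑ᵢ C* fᵢ` is closed: its orthogonal is the kernel of
`c ↦ (fᵢ ⇀ c)ᵢ`, so a functional vanishing on it factors as `ψ ∘ (fᵢ ⇀ ·)ᵢ`, i.e. equals
`∑ᵢ ψᵢ * fᵢ`. Conversely, if every left ideal is closed, a strictly ascending chain `Jₙ` has
strictly descending orthogonals `Dₙ`. Vectors `cₙ ∈ Dₙ \ Dₙ₊₁` are linearly independent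
modulo `⋂ Dₙ`, so some functional vanishes on `⋂ Dₙ` and is `1` at every `cₙ`: it lies in the
closure of `⋃ Jₙ`, which is `⋃ Jₙ`, yet in no `Jₙ`. -/

theorem _root_.wellFoundedGT_of_forall_not_strictMono {α : Type*} [Preorder α]
    (h : ∀ f : ℕ → α, ¬StrictMono f) : WellFoundedGT α :=
  ⟨RelEmbedding.wellFounded_iff_isEmpty.2 ⟨fun e => h e fun _ _ hab => e.map_rel_iff.2 hab⟩⟩

theorem _root_.linearIndependent_of_mem_of_notMem_succ {K M : Type*} [DivisionRing K]
    [AddCommGroup M] [Module K M] {E : ℕ → Submodule K M} (hE : Antitone E) {v : ℕ → M}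
    (hv : ∀ n, v n ∈ E n) (hv' : ∀ n, v n ∉ E (n + 1)) : LinearIndependent K v := by
  classical
  rw [linearIndependent_iff']
  intro s
  induction s using Finset.induction_on_min with
  | empty => simp
  | insert m s hm ih =>
    intro a hsum
    have hrest : ∑ j ∈ s, a j • v j ∈ E (m + 1) :=
      Submodule.sum_mem _ fun j hj => Submodule.smul_mem _ _ (hE (hm j hj) (hv j))
    have ham : a m = 0 := by
      by_contra ha
      have hmem : a m • v m ∈ E (m + 1) := by
        rw [Finset.sum_insert fun hms => (hm m hms).false, add_eq_zero_iff_eq_neg] at hsum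
        exact hsum ▸ neg_mem hrest
      exact hv' m ((Submodule.smul_mem_iff _ ha).1 hmem)
    rw [Finset.sum_insert fun hms => (hm m hms).false, ham, zero_smul, zero_add] at hsum
    simpa [ham] using ih a hsum

theorem _root_.Subspace.exists_mem_dualAnnihilator_iInf_notMem_of_strictAnti {K V : Type*}
    [Field K] [AddCommGroup V] [Module K V] {D : ℕ → Submodule K V} (hD : StrictAnti D) :
    ∃ f ∈ (⨅ n, D n).dualAnnihilator, ∀ n, f ∉ (D n).dualAnnihilator := by
  set W := ⨅ n, D n
  choose c hc hc' using fun n => SetLike.exists_of_lt (hD (Nat.lt_succ_self n))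
  have hli : LinearIndependent K (W.mkQ ∘ c) := by
    refine linearIndependent_of_mem_of_notMem_succ (E := fun n => (D n).map W.mkQ)
      (fun _ _ hmn => Submodule.map_mono (hD.antitone hmn))
      (fun n => Submodule.mem_map_of_mem (hc n)) fun n hn => hc' n ?_
    rwa [Function.comp_apply, ← Submodule.mem_comap, Submodule.comap_map_mkQ,
      sup_eq_right.2 (iInf_le D (n + 1))] at hn
  obtain ⟨g, hg⟩ := Module.exists_dual_forall_apply_eq_one (linearIndepOn_univ_iff.2 hli)
  refine ⟨g ∘ₗ W.mkQ, ?_, fun n hn => ?_⟩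
  · rw [Submodule.mem_dualAnnihilator]
    intro w hw
    simp [(Submodule.Quotient.mk_eq_zero W).2 hw]
  · rw [Submodule.mem_dualAnnihilator] at hn
    simpa using (hg n (Set.mem_univ n)).symm.trans (hn (c n) (hc n))

lemma perpD_eq_dualCoannihilator {K V : Type*} [Field K] [AddCommGroup V] [Module K V]
    (Φ : Submodule K (Module.Dual K V)) :
    perpD (Φ : Set (Module.Dual K V)) = (Φ.dualCoannihilator : Set V) := by
  ext c
  simp [perpD, Submodule.mem_dualCoannihilator]

lemma perpC_eq_dualAnnihilator {K V : Type*} [Field K] [AddCommGroup V] [Module K V]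
    (W : Submodule K V) : perpC (W : Set V) = (W.dualAnnihilator : Set (Module.Dual K V)) := by
  ext f
  simp [perpC, Submodule.mem_dualAnnihilator]

lemma mul_apply_eq_apply_wedge (g f : Module.Dual k C) (c : C) : (g * f) c = g (wedge f c) := by
  have h : (LinearMap.mul' k k ∘ₗ TensorProduct.map g f : C ⊗[k] C →ₗ[k] k)
      = g ∘ₗ (TensorProduct.rid k C).toLinearMap ∘ₗ f.lTensor C := by
    ext x y
    simp [mul_comm]
  rw [dual_mul_apply]
  simpa [wedge] using LinearMap.congr_fun h (comul (R := k) c)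

lemma perpD_span_range {ι : Type*} [Fintype ι] (f : ι → Module.Dual k C) :
    perpD (Ideal.span (Set.range f) : Set (Module.Dual k C))
      = LinearMap.ker (LinearMap.pi fun i => wedge (f i)) := by
  classical
  ext c
  simp only [perpD, Set.mem_ofPred_eq, SetLike.mem_coe, Ideal.mem_span_range_iff_exists_fun,
    LinearMap.mem_ker, funext_iff, LinearMap.pi_apply, Pi.zero_apply]
  constructor
  · intro h i
    rw [← Module.forall_dual_apply_eq_zero_iff k]
    intro g
    rw [← mul_apply_eq_apply_wedge]
    exact h _ ⟨Pi.single i g, by simp [Pi.single_apply, ite_mul]⟩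
  · rintro h _ ⟨a, rfl⟩
    simp [mul_apply_eq_apply_wedge, h]

lemma mem_span_range_of_mem_perpC_perpD {ι : Type*} [Fintype ι] [DecidableEq ι]
    (f : ι → Module.Dual k C) {φ : Module.Dual k C}
    (hφ : φ ∈ perpC (perpD (Ideal.span (Set.range f) : Set (Module.Dual k C)))) :
    φ ∈ Ideal.span (Set.range f) := by
  set W := LinearMap.pi fun i => wedge (f i)
  obtain ⟨ψ, rfl⟩ : φ ∈ LinearMap.range W.dualMap := by
    rw [LinearMap.range_dualMap_eq_dualAnnihilator_ker, ← SetLike.mem_coe,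
      ← perpC_eq_dualAnnihilator, ← perpD_span_range]
    exact hφ
  rw [Ideal.mem_span_range_iff_exists_fun]
  refine ⟨fun i => ψ ∘ₗ LinearMap.single k (fun _ => C) i, ?_⟩
  ext c
  conv_rhs => rw [LinearMap.dualMap_apply, ← Finset.univ_sum_single (W c), map_sum]
  simp [mul_apply_eq_apply_wedge, W]

theorem coe_eq_perpC_perpD_of_fg {J : Ideal (Module.Dual k C)} (hJ : J.FG) :
    (J : Set (Module.Dual k C)) = perpC (perpD (J : Set (Module.Dual k C))) := by
  obtain ⟨n, f, rfl⟩ := Submodule.fg_iff_exists_fin_generating_family.mp hJ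
  exact Set.Subset.antisymm (fun φ hφ _ hc => hc φ hφ)
    fun φ hφ => mem_span_range_of_mem_perpC_perpD f hφ

theorem isNoetherian_of_forall_coe_eq_perpC_perpD
    (hclosed : ∀ I : Ideal (Module.Dual k C),
      (I : Set (Module.Dual k C)) = perpC (perpD (I : Set (Module.Dual k C)))) :
    IsNoetherian (Module.Dual k C) (Module.Dual k C) := by
  have hclosed' (I : Ideal (Module.Dual k C)) :
      I.restrictScalars k = (I.restrictScalars k).dualCoannihilator.dualAnnihilator := by
    refine SetLike.coe_injective ((hclosed I).trans ?_)
    rw [← Submodule.coe_restrictScalars k I, perpD_eq_dualCoannihilator, perpC_eq_dualAnnihilator]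
  rw [isNoetherian_iff']
  refine wellFoundedGT_of_forall_not_strictMono fun J hJ => ?_
  let D : ℕ → Submodule k C := fun n => ((J n).restrictScalars k).dualCoannihilator
  have hD : StrictAnti D := by
    refine Antitone.strictAnti_of_injective
      (fun m n hmn => Submodule.dualCoannihilator_anti (hJ.monotone hmn)) fun m n hmn => ?_
    refine hJ.injective (Submodule.restrictScalars_injective k _ _ ?_)
    rw [hclosed' (J m), hclosed' (J n)]
    exact congrArg Submodule.dualAnnihilator hmn
  obtain ⟨f, hf, hfJ⟩ := Subspace.exists_mem_dualAnnihilator_iInf_notMem_of_strictAnti hD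
  have hf_iSup : f ∈ ⨆ n, J n := by
    rw [← Submodule.restrictScalars_mem k, hclosed' (⨆ n, J n)]
    exact Submodule.dualAnnihilator_anti
      (le_iInf fun n => Submodule.dualCoannihilator_anti (le_iSup J n)) hf
  obtain ⟨n, hn⟩ := (Submodule.mem_iSup_of_chain ⟨J, hJ.monotone⟩ f).1 hf_iSup
  exact hfJ n (hclosed' (J n) ▸ hn)

/-- Every left ideal of `C*` is closed in the finite topology iff `C*`
is left Noetherian. -/
theorem statement3 {k : Type*} [Field k] {C : Type*} [AddCommGroup C] [Module k C]
    [Coalgebra k C] :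
    (∀ I : Ideal (Module.Dual k C),
        (I : Set (Module.Dual k C)) = perpC (perpD (I : Set (Module.Dual k C)))) ↔
      IsNoetherian (Module.Dual k C) (Module.Dual k C) :=
  ⟨isNoetherian_of_forall_coe_eq_perpC_perpD,
    fun _ I => coe_eq_perpC_perpD_of_fg (IsNoetherian.noetherian I)⟩

end Paper
end
end

section
/- Let k be a field, C a k-coalgebra and C* its dual convolution algebra. If there are infinitely many isomorphism classes of simple rational left C*-modules, then there exists a simple left C*-module which is not rational. -/
open TensorProduct Coalgebra

noncomputable section

namespace Paper

variable {k : Type*} [Field k] {C : Type*} [AddCommGroup C] [Module k C] [Coalgebra k C]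

variable {k : Type*} [Field k] {C : Type*} [AddCommGroup C] [Module k C] [Coalgebra k C]

/-!
Put `L N = ⋂_{m ≥ N} I m`. These left ideals increase and miss `1`, so their union lies in a
maximal left ideal `J`; suppose `C* ⧸ J` were rational. Rationality of `C* ⧸ J` means that `J`
contains the annihilator of a finite-dimensional subspace `W ⊆ C`, and rationality of each
`C* ⧸ I m` makes `I m` closed for the finite topology, so `(L N)^⊥ = ∑_{m ≥ N} (I m)^⊥`. As the
`I m` are pairwise non-isomorphic, finite intersections of them are comaximal with the others,
which makes the subspaces `(I m)^⊥ ⊆ C` independent; hence `⋂_N (L N)^⊥ = 0`. On the other hand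
the decreasing subspaces `W ∩ (L N)^⊥` stabilize, and since `ε = 1 ∉ J` they contain some `w` with
`ε w ≠ 0`, which then lies in every `(L N)^⊥`.
-/

section SimpleQuotient

variable {R M : Type*} [Ring R] [AddCommGroup M] [Module R M]

theorem mkQ_comp_subtype_surjective {A N : Submodule R M} (h : A ⊔ N = ⊤) :
    Function.Surjective (N.mkQ ∘ₗ A.subtype) := by
  rw [← LinearMap.range_eq_top, LinearMap.range_comp, Submodule.range_subtype,
    Submodule.map_mkQ_eq_top, sup_comm, h]

/-- `M ⧸ N₁ ≅ A ⧸ (A ⊓ N₁)` maps onto `A ⧸ (A ⊓ N₂) ≅ M ⧸ N₂`, and by simplicity of `M ⧸ N₁`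
this surjection is injective. -/
theorem nonempty_quotEquiv_of_sup_eq_top {A N₁ N₂ : Submodule R M} (h₁ : A ⊔ N₁ = ⊤)
    (h₂ : A ⊔ N₂ = ⊤) (hN₁ : IsCoatom N₁) (hN₂ : N₂ ≠ ⊤) (hle : A ⊓ N₁ ≤ N₂) :
    Nonempty ((M ⧸ N₁) ≃ₗ[R] (M ⧸ N₂)) := by
  have := isSimpleModule_iff_isCoatom.mpr hN₁
  have := Submodule.Quotient.nontrivial_iff.mpr hN₂
  set ψ := N₁.mkQ ∘ₗ A.subtype
  set φ := N₂.mkQ ∘ₗ A.subtype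
  have hψ : Function.Surjective ψ := mkQ_comp_subtype_surjective h₁
  have hker : LinearMap.ker ψ ≤ LinearMap.ker φ := fun x hx => by
    simp only [ψ, φ, LinearMap.mem_ker, LinearMap.comp_apply, Submodule.subtype_apply,
      Submodule.mkQ_apply, Submodule.Quotient.mk_eq_zero] at hx ⊢
    exact hle ⟨x.2, hx⟩
  let f := (LinearMap.ker ψ).liftQ φ hker ∘ₗ (ψ.quotKerEquivOfSurjective hψ).symm.toLinearMap
  have hfψ : f ∘ₗ ψ = φ := by
    ext x
    simp [f, LinearMap.quotKerEquivOfSurjective_symm_apply]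
  have hf : Function.Surjective f := by
    have h : Function.Surjective (f ∘ₗ ψ) := hfψ ▸ mkQ_comp_subtype_surjective h₂
    exact Function.Surjective.of_comp (g := ψ) h
  have hf0 : f ≠ 0 := fun h0 => by
    obtain ⟨x, y, hxy⟩ := exists_pair_ne (M ⧸ N₂)
    obtain ⟨x', rfl⟩ := hf x
    obtain ⟨y', rfl⟩ := hf y
    simp [h0] at hxy
  exact ⟨.ofBijective f ⟨(LinearMap.injective_or_eq_zero f).resolve_right hf0, hf⟩⟩

theorem biInf_sup_eq_top_of_isCoatom {ι : Type*} {N : ι → Submodule R M}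
    (hN : ∀ i, IsCoatom (N i))
    (hne : ∀ i j, i ≠ j → IsEmpty ((M ⧸ N i) ≃ₗ[R] (M ⧸ N j)))
    (s : Finset ι) {i : ι} (hi : i ∉ s) : (⨅ j ∈ s, N j) ⊔ N i = ⊤ := by
  classical
  induction s using Finset.induction_on generalizing i with
  | empty => simp
  | @insert p s hp ih =>
    rw [Finset.mem_insert, not_or] at hi
    rw [Finset.iInf_insert]
    refine ((hN i).le_iff.mp le_sup_right).resolve_right fun h => ?_
    have hle : (⨅ j ∈ s, N j) ⊓ N p ≤ N i := inf_comm (N p) _ ▸ sup_eq_right.mp h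
    obtain ⟨e⟩ := nonempty_quotEquiv_of_sup_eq_top (ih hp) (ih hi.2) (hN p) (hN i).1 hle
    exact (hne p i (Ne.symm hi.1)).false e

theorem iSupIndep.eq_zero_of_forall_mem_iSup_ge {t : ℕ → Submodule R M} (ht : iSupIndep t)
    {x : M} (hx : ∀ N, x ∈ ⨆ m ≥ N, t m) : x = 0 := by
  obtain ⟨s, hs⟩ := Submodule.mem_iSup_iff_exists_finset.mp (hx 0)
  have hdisj : Disjoint (s : Set ℕ) (Set.Ici (s.sup id + 1)) :=
    Set.disjoint_left.mpr fun m hm hm' => by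
      have := Finset.le_sup (f := id) hm
      simp only [Set.mem_Ici, id] at hm' this
      omega
  have hle : ⨆ m ∈ s, ⨆ (_ : m ≥ 0), t m ≤ ⨆ m ∈ (s : Set ℕ), t m :=
    iSup₂_mono fun m _ => iSup_le fun _ => le_rfl
  exact Submodule.disjoint_def.mp (ht.disjoint_biSup_biSup hdisj) x (hle hs) (hx _)

end SimpleQuotient

section Duality

variable {V : Type*} [AddCommGroup V] [Module k V]

/-- The restrictions of `S` to `W` form a subspace of the finite-dimensional `W*`, which is its
own double orthogonal. -/
theorem exists_mem_eqOn_of_dualCoannihilator (S : Submodule k (Module.Dual k V))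
    (W : Submodule k V) [FiniteDimensional k W] {f : Module.Dual k V}
    (hf : ∀ w ∈ W, w ∈ S.dualCoannihilator → f w = 0) : ∃ g ∈ S, ∀ w ∈ W, f w = g w := by
  have hfS : W.subtype.dualMap f ∈ S.map W.subtype.dualMap := by
    rw [← Subspace.dualCoannihilator_dualAnnihilator_eq (W := S.map W.subtype.dualMap)]
    refine (Submodule.mem_dualAnnihilator _).mpr fun w hw => hf w w.2 ?_
    exact (Submodule.mem_dualCoannihilator _).mpr fun g hg =>
      (Submodule.mem_dualCoannihilator _).mp hw _ ⟨g, hg, rfl⟩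
  obtain ⟨g, hg, hgf⟩ := hfS
  exact ⟨g, hg, fun w hw => (LinearMap.congr_fun hgf ⟨w, hw⟩).symm⟩

theorem exists_mem_dualCoannihilator_apply_ne_zero {J S : Submodule k (Module.Dual k V)}
    (W : Submodule k V) [FiniteDimensional k W] (hWJ : W.dualAnnihilator ≤ J) (hSJ : S ≤ J)
    {f : Module.Dual k V} (hf : f ∉ J) : ∃ w ∈ W, w ∈ S.dualCoannihilator ∧ f w ≠ 0 := by
  by_contra! h
  obtain ⟨g, hg, hfg⟩ := exists_mem_eqOn_of_dualCoannihilator S W h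
  have hfg' : f - g ∈ J :=
    hWJ <| (Submodule.mem_dualAnnihilator _).mpr fun w hw => by simp [hfg w hw]
  exact hf (by simpa using J.add_mem hfg' (hSJ hg))

theorem dualCoannihilator_dualAnnihilator_eq_of_dualAnnihilator_le
    {S : Submodule k (Module.Dual k V)} (W : Submodule k V) [FiniteDimensional k W]
    (hW : W.dualAnnihilator ≤ S) : S.dualCoannihilator.dualAnnihilator = S := by
  refine le_antisymm (fun f hf => ?_) S.le_dualCoannihilator_dualAnnihilator
  by_contra hfS
  obtain ⟨w, -, hw, hfw⟩ := exists_mem_dualCoannihilator_apply_ne_zero W hW le_rfl hfS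
  exact hfw ((Submodule.mem_dualAnnihilator f).mp hf w hw)

theorem dualCoannihilator_biInf_eq {ι : Type*} {S : ι → Submodule k (Module.Dual k V)}
    (hS : ∀ i, (S i).dualCoannihilator.dualAnnihilator = S i) (s : Set ι) :
    (⨅ i ∈ s, S i).dualCoannihilator = ⨆ i ∈ s, (S i).dualCoannihilator := by
  have : ⨅ i ∈ s, S i = (⨆ i ∈ s, (S i).dualCoannihilator).dualAnnihilator := by
    simp only [Submodule.dualAnnihilator_iSup_eq, hS]
  rw [this, Subspace.dualAnnihilator_dualCoannihilator_eq]

theorem iSupIndep_dualCoannihilator {ι : Type*} {S : ι → Submodule k (Module.Dual k V)}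
    (hS : ∀ (s : Finset ι) i, i ∉ s → (⨅ j ∈ s, S j) ⊔ S i = ⊤) :
    iSupIndep fun i => (S i).dualCoannihilator := by
  intro i
  have : Disjoint (⨆ j ∈ ({i}ᶜ : Set ι), (S j).dualCoannihilator) (S i).dualCoannihilator := by
    refine disjoint_biSup_of_finite_disjoint_biSup fun t ht htf => ?_
    have hle : ⨆ j ∈ t, (S j).dualCoannihilator ≤ (⨅ j ∈ htf.toFinset, S j).dualCoannihilator :=
      iSup₂_le fun j hj => Submodule.dualCoannihilator_anti (iInf₂_le j (by simpa using hj))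
    refine Disjoint.mono_left hle (disjoint_iff.mpr ?_)
    rw [← Submodule.dualCoannihilator_sup_eq, hS _ i (by simpa using fun h => ht h rfl),
      Submodule.dualCoannihilator_top]
  simpa using this.symm

theorem exists_inf_le_iInf_of_antitone {K : ℕ → Submodule k V} (hK : Antitone K)
    (W : Submodule k V) [FiniteDimensional k W] : ∃ N₀, K N₀ ⊓ W ≤ ⨅ N, K N := by
  obtain ⟨N₀, hN₀⟩ := IsArtinian.monotone_stabilizes (R := k) (M := W)
    ⟨fun N => OrderDual.toDual ((K N).comap W.subtype), fun _ _ h => Submodule.comap_mono (hK h)⟩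
  refine ⟨N₀, fun x ⟨hxK, hxW⟩ => Submodule.mem_iInf _ |>.mpr fun N => ?_⟩
  rcases le_total N₀ N with h | h
  · have hN : (K N₀).comap W.subtype = (K N).comap W.subtype := hN₀ N h
    have hx : (⟨x, hxW⟩ : W) ∈ (K N₀).comap W.subtype := hxK
    exact (hN ▸ hx : (⟨x, hxW⟩ : W) ∈ (K N).comap W.subtype)
  · exact hK h hxK

end Duality

section RationalModules

theorem exists_dualAnnihilator_le_of_isRationalLeft {J : Ideal (Module.Dual k C)}
    (hJ : IsRationalLeft k C (Module.Dual k C ⧸ J)) :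
    ∃ W : Submodule k C, FiniteDimensional k W ∧ W.dualAnnihilator ≤ J.restrictScalars k := by
  obtain ⟨n, ms, cs, hcs⟩ := hJ (Submodule.Quotient.mk 1)
  refine ⟨Submodule.span k (Set.range cs), FiniteDimensional.span_of_finite k (Set.finite_range cs),
    fun f hf => ?_⟩
  have hfcs : ∀ i, f (cs i) = 0 :=
    fun i => (Submodule.mem_dualAnnihilator f).mp hf _ (Submodule.subset_span ⟨i, rfl⟩)
  have : f • (Submodule.Quotient.mk 1 : Module.Dual k C ⧸ J) = 0 := by simp [hcs f, hfcs]
  simpa [← Submodule.Quotient.mk_smul, Submodule.Quotient.mk_eq_zero] using this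

theorem dualCoannihilator_dualAnnihilator_eq_of_isRationalLeft {I : Ideal (Module.Dual k C)}
    (hI : IsRationalLeft k C (Module.Dual k C ⧸ I)) :
    (I.restrictScalars k).dualCoannihilator.dualAnnihilator = I.restrictScalars k := by
  obtain ⟨W, _, hW⟩ := exists_dualAnnihilator_le_of_isRationalLeft hI
  exact dualCoannihilator_dualAnnihilator_eq_of_dualAnnihilator_le W hW

theorem iSupIndep_dualCoannihilator_of_isCoatom {I : ℕ → Ideal (Module.Dual k C)}
    (hmax : ∀ n, IsCoatom (I n))
    (hpairwise : ∀ m n, m ≠ n →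
      IsEmpty ((Module.Dual k C ⧸ I m) ≃ₗ[Module.Dual k C] (Module.Dual k C ⧸ I n))) :
    iSupIndep fun n => ((I n).restrictScalars k).dualCoannihilator := by
  refine iSupIndep_dualCoannihilator fun s i hi => ?_
  simp only [← Submodule.restrictScalars_iInf, ← Submodule.restrictScalars_sup,
    biInf_sup_eq_top_of_isCoatom hmax hpairwise s hi, Submodule.restrictScalars_top]

end RationalModules

/-- Simple left `C*`-modules are represented by quotients of `C*` by maximal left ideals. -/
theorem statement14 {k : Type*} [Field k] {C : Type*} [AddCommGroup C] [Module k C]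
    [Coalgebra k C] (I : ℕ → Ideal (Module.Dual k C))
    (hmax : ∀ n, IsCoatom (I n))
    (hrat : ∀ n, IsRationalLeft k C (Module.Dual k C ⧸ I n))
    (hpairwise : ∀ m n, m ≠ n →
      IsEmpty ((Module.Dual k C ⧸ I m) ≃ₗ[Module.Dual k C] (Module.Dual k C ⧸ I n))) :
    ∃ J : Ideal (Module.Dual k C), IsCoatom J ∧
      ¬ IsRationalLeft k C (Module.Dual k C ⧸ J) := by
  set L : ℕ → Ideal (Module.Dual k C) := fun N => ⨅ m ≥ N, I m
  have hL : Monotone L := fun N N' h => le_iInf₂ fun m hm => iInf₂_le m (h.trans hm)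
  have hL_ne_top : ⨆ N, L N ≠ ⊤ := fun htop => by
    obtain ⟨N, hN⟩ := (Submodule.mem_iSup_of_directed L hL.directed_le).mp
      (htop ▸ Submodule.mem_top (x := 1))
    have hLI : L N ≤ I N := iInf₂_le N le_rfl
    exact (hmax N).1 ((Ideal.eq_top_iff_one _).mpr (hLI hN))
  obtain ⟨J, hJ, hLJ⟩ := Ideal.exists_le_maximal _ hL_ne_top
  refine ⟨J, Ideal.isMaximal_def.mp hJ, fun hJrat => ?_⟩
  obtain ⟨W, _, hWJ⟩ := exists_dualAnnihilator_le_of_isRationalLeft hJrat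
  set K : ℕ → Submodule k C := fun N => ((L N).restrictScalars k).dualCoannihilator
  have hK : ∀ N, K N = ⨆ m ≥ N, ((I m).restrictScalars k).dualCoannihilator := fun N => by
    simp only [K, L, Submodule.restrictScalars_iInf]
    exact dualCoannihilator_biInf_eq
      (fun m => dualCoannihilator_dualAnnihilator_eq_of_isRationalLeft (hrat m)) (Set.Ici N)
  obtain ⟨N₀, hN₀⟩ := exists_inf_le_iInf_of_antitone
    (fun _ _ h => Submodule.dualCoannihilator_anti (Submodule.restrictScalars_mono k (hL h))) W
  have h1J : (1 : Module.Dual k C) ∉ J.restrictScalars k :=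
    fun h => hJ.ne_top ((Ideal.eq_top_iff_one J).mpr h)
  obtain ⟨w, hwW, hwK, hw⟩ := exists_mem_dualCoannihilator_apply_ne_zero W hWJ
    (Submodule.restrictScalars_mono k ((le_iSup L N₀).trans hLJ)) h1J
  have hw0 : w = 0 := iSupIndep.eq_zero_of_forall_mem_iSup_ge
    (iSupIndep_dualCoannihilator_of_isCoatom hmax hpairwise)
    fun N => hK N ▸ (Submodule.mem_iInf K).mp (hN₀ ⟨hwK, hwW⟩) N
  exact hw (hw0 ▸ map_zero _)

end Paper
end
end

section
/- Let k be a field, C a k-coalgebra and C* its dual convolution algebra, and suppose C* is injective as a left module over itself. Then every simple rational left C*-module embeds into C* as a left C*-module if and only if every rational left C*-module embeds into a direct product of copies of C* as a left C*-module. -/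
/-!
For `m ≠ 0` in a rational module `M`, take `N` maximal among submodules avoiding `m`. Every
nonzero submodule of `M ⧸ N` contains the image of `m`, which therefore generates a simple
submodule; rationality passes to quotients and submodules, so this simple module embeds into
`C*`, and self-injectivity of `C*` extends the embedding to a map `M ⧸ N → C*` not killing `m`.
Hence the maps `M → C*` separate points. Conversely, each coordinate of an embedding of a simple
module into a product is injective or zero, and they cannot all vanish.
-/

open TensorProduct Coalgebra

noncomputable section

theorem Submodule.exists_dual_expansion {K V : Type*} [Field K] [AddCommGroup V] [Module K V]
    (W : Submodule K V) [FiniteDimensional K W] :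
    ∃ (d : ℕ) (b : Fin d → V) (g : Fin d → Module.Dual K V),
      ∀ f : Module.Dual K V, ∀ x ∈ W, f x = (∑ j, f (b j) • g j) x := by
  let b := Module.finBasis K W
  choose g hg using fun j => LinearMap.exists_extend (b.coord j)
  refine ⟨_, fun j => b j, g, fun f x hx => ?_⟩
  have hexp := LinearMap.congr_fun (b.sum_dual_apply_smul_coord (f ∘ₗ W.subtype)) ⟨x, hx⟩
  simp only [LinearMap.sum_apply, LinearMap.smul_apply, ← hg, LinearMap.comp_apply] at hexp ⊢
  exact hexp.symm

section Cogenerator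

variable {R : Type*} [Ring R] {M : Type*} [AddCommGroup M] [Module R M]

theorem Submodule.exists_maximal_notMem {m : M} (hm : m ≠ 0) :
    ∃ N : Submodule R M, Maximal (m ∉ ·) N := by
  refine (zorn_le_nonempty₀ {N : Submodule R M | m ∉ N} (fun c hc hchain N hN => ?_) ⊥
    (by simpa using hm)).imp fun _ => And.right
  refine ⟨sSup c, fun hmem => ?_, fun _ => le_sSup⟩
  obtain ⟨P, hP, hmP⟩ := (Submodule.mem_sSup_of_directed ⟨N, hN⟩ hchain.directedOn).mp hmem
  exact hc hP hmP

theorem Submodule.mkQ_mem_of_maximal_notMem {m : M} {N : Submodule R M}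
    (hN : Maximal (m ∉ ·) N) {P : Submodule R (M ⧸ N)} (hP : P ≠ ⊥) : N.mkQ m ∈ P := by
  by_contra hmP
  have hle : N ≤ P.comap N.mkQ := Submodule.le_comap_mkQ N P
  have heq : P.comap N.mkQ = N := le_antisymm (hN.2 hmP hle) hle
  apply hP
  rw [← Submodule.map_comap_eq_of_surjective N.mkQ_surjective P, heq, Submodule.mkQ_map_self]

theorem Submodule.isSimpleModule_span_mkQ {m : M} {N : Submodule R M}
    (hN : Maximal (m ∉ ·) N) : IsSimpleModule R (Submodule.span R {N.mkQ m}) := by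
  have hm : N.mkQ m ≠ 0 := (Submodule.Quotient.mk_eq_zero N).not.mpr hN.1
  refine isSimpleModule_iff_isAtom.mpr ⟨by simpa using hm, fun P hP => ?_⟩
  by_contra hP0
  exact hP.not_ge (Submodule.span_singleton_le_iff_mem _ _ |>.mpr
    (Submodule.mkQ_mem_of_maximal_notMem hN hP0))

theorem Module.Injective.exists_apply_ne_zero {E : Type v} [AddCommGroup E] [Module R E]
    [Small.{v} R] [Module.Injective R E] (S : Submodule R M) (g : S →ₗ[R] E)
    (hg : Function.Injective g) {x : M} (hxS : x ∈ S) (hx : x ≠ 0) :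
    ∃ φ : M →ₗ[R] E, φ x ≠ 0 := by
  obtain ⟨φ, hφ⟩ :=
    Module.Injective.extension_property R E S M S.subtype S.injective_subtype g
  have hφx : φ x = g ⟨x, hxS⟩ := LinearMap.congr_fun hφ ⟨x, hxS⟩
  exact ⟨φ, hφx ▸ (map_ne_zero_iff g hg).mpr fun h => hx (congrArg Subtype.val h)⟩

theorem LinearMap.pi_injective_of_separating {E : Type*} [AddCommGroup E] [Module R E]
    (h : ∀ m : M, m ≠ 0 → ∃ φ : M →ₗ[R] E, φ m ≠ 0) :
    Function.Injective (LinearMap.pi fun φ : M →ₗ[R] E => φ) := by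
  refine (injective_iff_map_eq_zero _).mpr fun m hm => ?_
  by_contra hm0
  obtain ⟨φ, hφ⟩ := h m hm0
  exact hφ (congrFun hm φ)

theorem IsSimpleModule.exists_injective_proj_comp {T E ι : Type*} [AddCommGroup T]
    [Module R T] [IsSimpleModule R T] [AddCommGroup E] [Module R E] {g : T →ₗ[R] ι → E}
    (hg : Function.Injective g) : ∃ i, Function.Injective (LinearMap.proj i ∘ₗ g) := by
  by_contra! h
  have hg0 : g = 0 := by
    ext x i
    have hi := (LinearMap.proj i ∘ₗ g).injective_or_eq_zero.resolve_left (h i)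
    exact LinearMap.congr_fun hi x
  have : Nontrivial T := IsSimpleModule.nontrivial R T
  obtain ⟨t, ht⟩ := exists_ne (0 : T)
  exact ht (hg (by simp [hg0]))

end Cogenerator

namespace Paper

section Rational

variable {k C : Type*} [Field k] [AddCommGroup C] [Module k C] [Coalgebra k C]
variable {M : Type*} [AddCommGroup M] [Module (Module.Dual k C) M]

theorem smul_one_smul_smul (a : k) (g : Module.Dual k C) (x : M) :
    (a • (1 : Module.Dual k C)) • g • x = (a • g) • x := by
  rw [← mul_smul, smul_mul_assoc, one_mul]

/-- The coefficients `mᵢ` of a rational element `m` can be taken in its cyclic submodule: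
expanding `f` in a dual basis of the span of the `cᵢ` turns them into `gⱼ • m`. -/
theorem exists_smul_eq_sum_smul_smul {m : M} {n : ℕ} {ms : Fin n → M} {cs : Fin n → C}
    (h : ∀ f : Module.Dual k C, f • m = ∑ i, (f (cs i) • (1 : Module.Dual k C)) • ms i) :
    ∃ (d : ℕ) (b : Fin d → C) (g : Fin d → Module.Dual k C),
      ∀ f : Module.Dual k C,
        f • m = ∑ j, (f (b j) • (1 : Module.Dual k C)) • g j • m := by
  have := FiniteDimensional.span_of_finite k (Set.finite_range cs)
  obtain ⟨d, b, g, hg⟩ := (Submodule.span k (Set.range cs)).exists_dual_expansion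
  refine ⟨d, b, g, fun f => ?_⟩
  have hkill : (f - ∑ j, f (b j) • g j) • m = 0 := by
    rw [h]
    refine Finset.sum_eq_zero fun i _ => ?_
    rw [LinearMap.sub_apply, ← hg f _ (Submodule.subset_span ⟨i, rfl⟩), sub_self, zero_smul,
      zero_smul]
  rw [sub_smul, sub_eq_zero, Finset.sum_smul] at hkill
  simp only [hkill, smul_one_smul_smul]

theorem IsRationalLeft.submodule (hM : IsRationalLeft k C M)
    (N : Submodule (Module.Dual k C) M) : IsRationalLeft k C N := by
  intro x
  obtain ⟨n, ms, cs, h⟩ := hM x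
  obtain ⟨d, b, g, hg⟩ := exists_smul_eq_sum_smul_smul h
  exact ⟨d, fun j => g j • x, b, fun f => Subtype.ext (by simpa using hg f)⟩

theorem IsRationalLeft.of_surjective {M' : Type*} [AddCommGroup M']
    [Module (Module.Dual k C) M'] (hM : IsRationalLeft k C M) (φ : M →ₗ[Module.Dual k C] M')
    (hφ : Function.Surjective φ) :
    IsRationalLeft k C M' := by
  intro y
  obtain ⟨x, rfl⟩ := hφ y
  obtain ⟨n, ms, cs, h⟩ := hM x
  exact ⟨n, φ ∘ ms, cs, fun f => by
    rw [← map_smul, h, map_sum]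
    simp only [Function.comp_apply, map_smul]⟩

end Rational

/-- Suppose `C*` is left self-injective. Then every simple rational left
`C*`-module embeds into `C*` iff every rational left `C*`-module embeds into a direct
product of copies of `C*`. -/
theorem statement19 {k : Type u} [Field k] {C : Type u} [AddCommGroup C] [Module k C]
    [Coalgebra k C]
    (hinj : Module.Injective (Module.Dual k C) (Module.Dual k C)) :
    (∀ (T : Type v) [AddCommGroup T] [Module (Module.Dual k C) T],
        IsSimpleModule (Module.Dual k C) T → IsRationalLeft k C T →
        ∃ g : T →ₗ[Module.Dual k C] Module.Dual k C, Function.Injective g) ↔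
      ∀ (M : Type v) [AddCommGroup M] [Module (Module.Dual k C) M],
        IsRationalLeft k C M →
        ∃ (ι : Type (max u v)) (g : M →ₗ[Module.Dual k C] (ι → Module.Dual k C)),
          Function.Injective g := by
  constructor
  · intro hsimple M _ _ hM
    refine ⟨_, _, LinearMap.pi_injective_of_separating (E := Module.Dual k C)
      fun m hm => ?_⟩
    obtain ⟨N, hN⟩ := Submodule.exists_maximal_notMem (R := Module.Dual k C) hm
    let S := Submodule.span (Module.Dual k C) {N.mkQ m}
    obtain ⟨g, hg⟩ := hsimple S (Submodule.isSimpleModule_span_mkQ hN)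
      ((hM.of_surjective N.mkQ N.mkQ_surjective).submodule S)
    obtain ⟨φ, hφ⟩ := hinj.exists_apply_ne_zero S g hg (Submodule.mem_span_singleton_self _)
      ((Submodule.Quotient.mk_eq_zero N).not.mpr hN.1)
    exact ⟨φ ∘ₗ N.mkQ, hφ⟩
  · intro hprod T _ _ hT hrat
    obtain ⟨ι, g, hg⟩ := hprod T hrat
    obtain ⟨i, hi⟩ := hT.exists_injective_proj_comp hg
    exact ⟨_, hi⟩

end Paper
end
end
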